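/- arXiv:2410.08380 — 2 statements merged into one kernel-verified Lean document; each statement's English description precedes it below -/
import Mathlib

section
/- Let G = (V,E) be a graph on n vertices with hopping forcing number H(G) ≤ k (and n − k even). Then V can be partitioned into sets S, T, U with |S| = |T| = (n−k)/2 and |U| = k such that there is no edge of G between S and T. -/
open scoped Classical

/-- One step of the (sequential) hopping forcing process on a graph `G`.  A state is a pair
`(B, H)` where `B` is the current set of blue vertices and `H` is the set of vertices that
have already performed a hop.  In one step a blue vertex `v ∈ B` that has not hopped yet and
all of whose neighbours are blue colours a white vertex `w` at distance exactly two blue. -/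
def HopStep {V : Type*} [DecidableEq V] (G : SimpleGraph V) :
    Finset V × Finset V → Finset V × Finset V → Prop := fun p q =>
  ∃ v w, v ∈ p.1 ∧ v ∉ p.2 ∧ (∀ u, G.Adj v u → u ∈ p.1) ∧ w ∉ p.1 ∧
    G.dist v w = 2 ∧ q = (insert w p.1, insert v p.2)

/-- `B` is a feasible initial set of blue vertices: some hopping forcing process starting
from `B` ends with every vertex blue. -/
def HopFeasible {V : Type*} [Fintype V] [DecidableEq V] (G : SimpleGraph V)
    (B : Finset V) : Prop :=
  ∃ H : Finset V, Relation.ReflTransGen (HopStep G) (B, ∅) (Finset.univ, H)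

/-- The hopping forcing number of `G`: the minimum size of a feasible initial blue set. -/
noncomputable def hopNumber {V : Type*} [Fintype V] [DecidableEq V] (G : SimpleGraph V) : ℕ :=
  sInf {k | ∃ B : Finset V, B.card = k ∧ HopFeasible G B}

/-- The probability, under the uniform distribution over all `d`-regular simple graphs on
the labelled vertex set `Fin n`, that the random graph satisfies the property `P`. -/
noncomputable def regProb (n d : ℕ) (P : SimpleGraph (Fin n) → Prop) : ℝ :=
  (Nat.card {G : SimpleGraph (Fin n) // G.IsRegularOfDegree d ∧ P G} : ℝ) /
    (Nat.card {G : SimpleGraph (Fin n) // G.IsRegularOfDegree d} : ℝ)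

/-- The adjacency matrix of a graph is Hermitian over `ℝ`. -/
lemma adjMatrix_isHermitian {n : ℕ} (G : SimpleGraph (Fin n)) [DecidableRel G.Adj] :
    (SimpleGraph.adjMatrix ℝ G).IsHermitian := by
  ext i j
  simp [Matrix.conjTranspose_apply, SimpleGraph.adj_comm]

/-- `graphLambda G` is `λ(G) = max (|λ₂|, |λₙ|)`, where
`λ₁ ≥ λ₂ ≥ ⋯ ≥ λₙ` are the eigenvalues of the adjacency matrix of `G`
(it is junk, namely `0`, if `G` has fewer than two vertices). -/
noncomputable def graphLambda {n : ℕ} (G : SimpleGraph (Fin n)) : ℝ :=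
  if h : 2 ≤ n then
    -- eigenvalues sorted in nondecreasing order
    let e : Fin n → ℝ :=
      (adjMatrix_isHermitian G).eigenvalues ∘ Tuple.sort (adjMatrix_isHermitian G).eigenvalues
    max |e ⟨n - 2, by omega⟩| |e ⟨0, by omega⟩|
  else 0

/-- `|E(S,T)|`: the number of pairs `(s, t) ∈ S × T` with `s` adjacent to `t`; this counts
every edge between `S \ T` and `T` once and every edge inside `S ∩ T` twice. -/
noncomputable def edgeCount {V : Type*} (G : SimpleGraph V) (S T : Finset V) : ℕ :=
  ∑ s ∈ S, ∑ t ∈ T, if G.Adj s t then 1 else 0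

/- Take a feasible set `B` with `|B| = H(G) ≤ k` and stop its forcing process after
`m = (n - k)/2` hops. Every hop adds one blue vertex, and a vertex only hops once its whole
neighbourhood is blue, so the `m` hopped vertices `S` have all their neighbours among the
`|B| + m ≤ k + m` blue vertices. At least `m` vertices are still white; any `m` of them form `T`. -/

theorem Relation.ReflTransGen.exists_eq_of_map_succ {α : Type*} {r : α → α → Prop} {f : α → ℕ}
    (hf : ∀ a b, r a b → f b = f a + 1) {a c : α} (h : Relation.ReflTransGen r a c) {t : ℕ}
    (hat : f a ≤ t) (htc : t ≤ f c) : ∃ b, Relation.ReflTransGen r a b ∧ f b = t := by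
  induction h with
  | refl => exact ⟨a, .refl, le_antisymm hat htc⟩
  | @tail b c hab hbc ih =>
    rcases Nat.lt_or_ge (f b) t with ht | ht
    · exact ⟨c, hab.tail hbc, by have := hf b c hbc; omega⟩
    · exact ih ht

/-- Satisfied by every state reachable from an initial blue set of size `b`. -/
def HopInvariant {V : Type*} (G : SimpleGraph V) (b : ℕ) (p : Finset V × Finset V) : Prop :=
  p.2 ⊆ p.1 ∧ (∀ v ∈ p.2, ∀ u, G.Adj v u → u ∈ p.1) ∧ p.1.card = b + p.2.card

theorem hopInvariant_init {V : Type*} {G : SimpleGraph V} (B : Finset V) :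
    HopInvariant G B.card (B, ∅) := by
  simp [HopInvariant]

section HopStep

variable {V : Type*} [DecidableEq V] {G : SimpleGraph V}

theorem HopStep.card_snd {p q : Finset V × Finset V} (h : HopStep G p q) :
    q.2.card = p.2.card + 1 := by
  obtain ⟨v, w, -, hv, -, -, -, rfl⟩ := h
  exact Finset.card_insert_of_notMem hv

theorem HopInvariant.hopStep {b : ℕ} {p q : Finset V × Finset V} (hp : HopInvariant G b p)
    (h : HopStep G p q) : HopInvariant G b q := by
  obtain ⟨v, w, hvB, hvH, hvN, hwB, -, rfl⟩ := h
  obtain ⟨hHB, hHN, hcard⟩ := hp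
  refine ⟨Finset.insert_subset (Finset.mem_insert_of_mem hvB)
      (hHB.trans (Finset.subset_insert _ _)), ?_, ?_⟩
  · intro x hx u hu
    rcases Finset.mem_insert.mp hx with rfl | hx
    · exact Finset.mem_insert_of_mem (hvN u hu)
    · exact Finset.mem_insert_of_mem (hHN x hx u hu)
  · rw [Finset.card_insert_of_notMem hwB, Finset.card_insert_of_notMem hvH, hcard]
    rfl

theorem HopInvariant.reflTransGen {b : ℕ} {p q : Finset V × Finset V} (hp : HopInvariant G b p)
    (h : Relation.ReflTransGen (HopStep G) p q) : HopInvariant G b q := by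
  induction h with
  | refl => exact hp
  | tail _ hstep ih => exact ih.hopStep hstep

theorem HopFeasible.exists_hopInvariant_card_snd_eq [Fintype V] {B : Finset V}
    (hB : HopFeasible G B) {m : ℕ} (hm : B.card + m ≤ Fintype.card V) :
    ∃ p, HopInvariant G B.card p ∧ p.2.card = m := by
  obtain ⟨H, hBH⟩ := hB
  have hfinal := (hopInvariant_init (G := G) B).reflTransGen hBH
  have hH : B.card + H.card = Fintype.card V := by
    simpa using hfinal.2.2.symm
  obtain ⟨p, hp, hpm⟩ := hBH.exists_eq_of_map_succ (fun _ _ h => h.card_snd)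
    (by simp) (show m ≤ H.card by omega)
  exact ⟨p, (hopInvariant_init B).reflTransGen hp, hpm⟩

theorem exists_hopFeasible_card_eq_hopNumber [Fintype V] (G : SimpleGraph V) :
    ∃ B : Finset V, B.card = hopNumber G ∧ HopFeasible G B := by
  have hne : {k | ∃ B : Finset V, B.card = k ∧ HopFeasible G B}.Nonempty :=
    ⟨_, Finset.univ, rfl, ∅, .refl⟩
  exact Nat.sInf_mem hne

end HopStep

theorem SimpleGraph.exists_nonadj_of_neighbors_subset {V : Type*} [Fintype V] {G : SimpleGraph V}
    {S R : Finset V} (hS : ∀ s ∈ S, ∀ u, G.Adj s u → u ∈ R) (hSR : S ⊆ R) {m : ℕ}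
    (hm : R.card + m ≤ Fintype.card V) :
    ∃ T : Finset V, Disjoint S T ∧ T.card = m ∧ ∀ s ∈ S, ∀ t ∈ T, ¬ G.Adj s t := by
  obtain ⟨T, hTR, hT⟩ := Finset.exists_subset_card_eq
    (show m ≤ Rᶜ.card by rw [Finset.card_compl]; omega)
  have hTR' : ∀ t ∈ T, t ∉ R := fun t ht => Finset.mem_compl.mp (hTR ht)
  refine ⟨T, Finset.disjoint_right.mpr fun t ht hs => hTR' t ht (hSR hs), hT, ?_⟩
  exact fun s hs t ht hst => hTR' t ht (hS s hs t hst)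

/-- If $G$ is a graph on $n$ vertices with $H(G) \le k$ (and $n-k$ even),
then $V$ can be partitioned into sets $S, T, U$ with $|S| = |T| = (n-k)/2$ and $|U| = k$
such that there is no edge between $S$ and $T$. -/
theorem partition_of_hopNumber_le {V : Type*} [Fintype V] [DecidableEq V]
    (G : SimpleGraph V) (n k : ℕ) (hn : Fintype.card V = n) (hk : k ≤ n)
    (heven : Even (n - k)) (hH : hopNumber G ≤ k) :
    ∃ S T U : Finset V,
      Disjoint S T ∧ Disjoint S U ∧ Disjoint T U ∧ S ∪ T ∪ U = Finset.univ ∧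
      S.card = (n - k) / 2 ∧ T.card = (n - k) / 2 ∧ U.card = k ∧
      ∀ s ∈ S, ∀ t ∈ T, ¬ G.Adj s t := by
  obtain ⟨m, hm⟩ := heven
  obtain ⟨B, hBcard, hB⟩ := exists_hopFeasible_card_eq_hopNumber G
  obtain ⟨⟨R, S⟩, ⟨hSR, hSN, hRcard⟩, hScard⟩ :=
    hB.exists_hopInvariant_card_snd_eq (m := m) (by omega)
  dsimp only at hSR hSN hRcard hScard
  obtain ⟨T, hST, hTcard, hnonadj⟩ :=
    SimpleGraph.exists_nonadj_of_neighbors_subset hSN hSR (m := m) (by omega)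
  refine ⟨S, T, (S ∪ T)ᶜ, hST, disjoint_compl_right.mono_left Finset.subset_union_left,
    disjoint_compl_right.mono_left Finset.subset_union_right, Finset.union_compl _,
    by omega, by omega, ?_, hnonadj⟩
  rw [Finset.card_compl, Finset.card_union_of_disjoint hST]
  omega
end

section
/- Fix an integer d ≥ 3 and x ∈ (0,1). For all y, z with y > 0, z > 0, y + z < 1, yx < (1−x)/2 and zx < (1−x)/2, one has f_d(x,y,z) ≤ h_d(x) = g_d(x, z₀(x)) = f_d(x, z₀(x), z₀(x)). -/
/-- The function $f_d(x,y,z)$ from the paper. -/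
noncomputable def fFun (d : ℕ) (x y z : ℝ) : ℝ :=
  ((d : ℝ) - 1 - d * (y + z) - (1 - y - z) * d / 2) * x * Real.log x
    + ((d : ℝ) - 1) * (1 - x) * Real.log ((1 - x)/2)
    - d * x * y * Real.log y - d * x * z * Real.log z
    - (1 - y - z) * d * x / 2 * Real.log (1 - y - z)
    - d / 2 * ((1 - x)/2 - y * x) * Real.log ((1 - x)/2 - y * x)
    - d / 2 * ((1 - x)/2 - z * x) * Real.log ((1 - x)/2 - z * x)

/-- The function $g_d(x,z)$ from the paper. -/
noncomputable def gFun (d : ℕ) (x z : ℝ) : ℝ :=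
  ((d : ℝ)/2 - 1 - d * z) * x * Real.log x
    + ((d : ℝ) - 1) * (1 - x) * Real.log ((1 - x)/2)
    - 2 * d * x * z * Real.log z
    - (1 - 2*z) * d * x / 2 * Real.log (1 - 2*z)
    - d * ((1 - x)/2 - z * x) * Real.log ((1 - x)/2 - z * x)

/-- The maximizer $z_0(x) = \frac{1-\sqrt{1-2(1-x)x}}{2x}$. -/
noncomputable def z0 (x : ℝ) : ℝ := (1 - Real.sqrt (1 - 2 * (1 - x) * x)) / (2 * x)

/-- The function $h_d(x) = g_d(x, z_0(x))$. -/
noncomputable def hFun (d : ℕ) (x : ℝ) : ℝ := gFun d x (z0 x)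

/-! Since `t ↦ t log t` is convex, replacing `y` and `z` by their mean does not decrease `f`,
which reduces the claim to the one-variable function `g d x = fun z ↦ f d x z z`. Its derivative
`d x (log ((1 - 2z)((1 - x)/2 - z x)) - log (x z²))` has the sign of
`(1 - 2z)((1 - x)/2 - z x) - x z² = x z² - z + (1 - x)/2 = (z0 - z)(1 - x (z + z0))`,
since `z0` is the smaller root of this quadratic; so `g d x` increases up to `z0` and decreases
after it. -/

open Real Set

lemma fFun_self_eq_gFun (d : ℕ) (x z : ℝ) : fFun d x z z = gFun d x z := by
  simp only [fFun, gFun]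
  rw [show (1 : ℝ) - z - z = 1 - 2 * z by ring]
  ring

lemma mul_log_midpoint_le {a b : ℝ} (ha : 0 ≤ a) (hb : 0 ≤ b) :
    (a + b) / 2 * log ((a + b) / 2) ≤ (a * log a + b * log b) / 2 := by
  have h := convexOn_mul_log.2 (mem_Ici.2 ha) (mem_Ici.2 hb)
    (by norm_num : (0 : ℝ) ≤ 1 / 2) (by norm_num : (0 : ℝ) ≤ 1 / 2) (by norm_num)
  simp only [smul_eq_mul] at h
  rw [show 1 / 2 * a + 1 / 2 * b = (a + b) / 2 by ring] at h
  linarith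

lemma fFun_le_gFun_midpoint (d : ℕ) {x y z : ℝ} (hx : 0 ≤ x) (hy : 0 ≤ y) (hz : 0 ≤ z)
    (hyx : y * x ≤ (1 - x) / 2) (hzx : z * x ≤ (1 - x) / 2) :
    fFun d x y z ≤ gFun d x ((y + z) / 2) := by
  have hyz := mul_log_midpoint_le hy hz
  have huv := mul_log_midpoint_le (sub_nonneg.2 hyx) (sub_nonneg.2 hzx)
  set u := (1 - x) / 2 - y * x
  set v := (1 - x) / 2 - z * x
  rw [show (u + v) / 2 = (1 - x) / 2 - (y + z) / 2 * x by ring] at huv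
  have hgap : gFun d x ((y + z) / 2) - fFun d x y z
      = 2 * d * x * ((y * log y + z * log z) / 2 - (y + z) / 2 * log ((y + z) / 2))
        + d * ((u * log u + v * log v) / 2
          - ((1 - x) / 2 - (y + z) / 2 * x) * log ((1 - x) / 2 - (y + z) / 2 * x)) := by
    simp only [fFun, gFun, u, v]
    rw [show (1 : ℝ) - 2 * ((y + z) / 2) = 1 - y - z by ring]
    ring
  have h₁ : 0 ≤ 2 * (d : ℝ) * x * ((y * log y + z * log z) / 2
      - (y + z) / 2 * log ((y + z) / 2)) := mul_nonneg (by positivity) (by linarith)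
  have h₂ : 0 ≤ (d : ℝ) * ((u * log u + v * log v) / 2
      - ((1 - x) / 2 - (y + z) / 2 * x) * log ((1 - x) / 2 - (y + z) / 2 * x)) :=
    mul_nonneg d.cast_nonneg (by linarith)
  linarith

lemma two_mul_mul_z0 {x : ℝ} (hx : x ≠ 0) : 2 * x * z0 x = 1 - √(1 - 2 * (1 - x) * x) := by
  rw [z0]; field_simp

lemma z0_isRoot {x : ℝ} (hx : x ≠ 0) : x * z0 x ^ 2 - z0 x + (1 - x) / 2 = 0 := by
  have hsq : (1 - 2 * x * z0 x) ^ 2 = 1 - 2 * (1 - x) * x := by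
    rw [two_mul_mul_z0 hx, sub_sub_cancel]
    exact sq_sqrt (by nlinarith [sq_nonneg (1 - 2 * x)])
  have h : 4 * x * (x * z0 x ^ 2 - z0 x + (1 - x) / 2) = 0 := by linear_combination hsq
  simpa [hx] using h

lemma z0_pos {x : ℝ} (hx0 : 0 < x) (hx1 : x < 1) : 0 < z0 x := by
  have h := two_mul_mul_z0 hx0.ne'
  have : √(1 - 2 * (1 - x) * x) < 1 := (sqrt_lt' one_pos).2 (by nlinarith)
  nlinarith

lemma z0_lt_half {x : ℝ} (hx0 : 0 < x) : z0 x < 1 / 2 := by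
  have h := two_mul_mul_z0 hx0.ne'
  have : 1 - x < √(1 - 2 * (1 - x) * x) := lt_sqrt_of_sq_lt (by nlinarith)
  nlinarith

lemma z0_mul_lt {x : ℝ} (hx0 : 0 < x) (hx1 : x < 1) : z0 x * x < (1 - x) / 2 := by
  have h := two_mul_mul_z0 hx0.ne'
  have : x < √(1 - 2 * (1 - x) * x) := lt_sqrt_of_sq_lt (by nlinarith)
  nlinarith

lemma mul_sub_mul_sq_eq_z0_sub_mul {x : ℝ} (hx : x ≠ 0) (t : ℝ) :
    (1 - 2 * t) * ((1 - x) / 2 - t * x) - x * t ^ 2 = (z0 x - t) * (1 - x * (t + z0 x)) := by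
  linear_combination z0_isRoot hx

lemma hasDerivAt_gFun (d : ℕ) {x t : ℝ} (hx : 0 < x) (ht : 0 < t) (ht2 : t < 1 / 2)
    (htx : t * x < (1 - x) / 2) :
    HasDerivAt (gFun d x)
      (d * x * (log ((1 - 2 * t) * ((1 - x) / 2 - t * x)) - log (x * t ^ 2))) t := by
  have hw : HasDerivAt (fun z => 1 - 2 * z) (-(2 * 1)) t :=
    ((hasDerivAt_id t).const_mul 2).const_sub 1
  have hu : HasDerivAt (fun z => (1 - x) / 2 - z * x) (-(1 * x)) t :=
    ((hasDerivAt_id t).mul_const x).const_sub _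
  have hw' := (hasDerivAt_mul_log (by linarith : 1 - 2 * t ≠ 0)).comp t hw
  have hu' := (hasDerivAt_mul_log (by linarith : (1 - x) / 2 - t * x ≠ 0)).comp t hu
  -- with `φ t = t log t`:
  -- `g = C - (d x log x) z - 2 d x φ(z) - (d x / 2) φ(1 - 2 z) - d φ((1 - x) / 2 - z x)`
  have h := (((((hasDerivAt_id t).const_mul (d * x * log x)).const_sub
    (((d : ℝ) / 2 - 1) * x * log x + ((d : ℝ) - 1) * (1 - x) * log ((1 - x) / 2))).sub
    ((hasDerivAt_mul_log ht.ne').const_mul (2 * d * x))).sub (hw'.const_mul (d * x / 2))).sub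
    (hu'.const_mul (d : ℝ))
  refine (h.congr_of_eventuallyEq (Filter.Eventually.of_forall fun z => ?_)).congr_deriv ?_
  · simp only [gFun, Pi.sub_apply, Function.comp_apply, id]; ring
  · rw [log_mul (by linarith) (by linarith), log_mul hx.ne' (by positivity), log_pow]
    push_cast; ring

lemma gFun_le_gFun_z0 (d : ℕ) {x z : ℝ} (hx0 : 0 < x) (hx1 : x < 1) (hz : 0 < z)
    (hz2 : z < 1 / 2) (hzx : z * x < (1 - x) / 2) : gFun d x z ≤ gFun d x (z0 x) := by
  set c := min (1 / 2) ((1 - x) / (2 * x))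
  have mem : ∀ {t}, t ∈ Ioo 0 c ↔ 0 < t ∧ t < 1 / 2 ∧ t * x < (1 - x) / 2 := by
    intro t
    rw [mem_Ioo, lt_min_iff, lt_div_iff₀ (mul_pos two_pos hx0)]
    constructor <;> rintro ⟨h₁, h₂, h₃⟩ <;> exact ⟨h₁, h₂, by linarith⟩
  have hderiv : ∀ t ∈ Ioo 0 c, HasDerivAt (gFun d x)
      (d * x * (log ((1 - 2 * t) * ((1 - x) / 2 - t * x)) - log (x * t ^ 2))) t := by
    intro t ht
    obtain ⟨h₁, h₂, h₃⟩ := mem.1 ht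
    exact hasDerivAt_gFun d hx0 h₁ h₂ h₃
  have hz0 : z0 x ∈ Ioo 0 c := mem.2 ⟨z0_pos hx0 hx1, z0_lt_half hx0, z0_mul_lt hx0 hx1⟩
  have hleft : Ioo 0 (z0 x) ⊆ Ioo 0 c := Ioo_subset_Ioo_right hz0.2.le
  have hright : Ioo (z0 x) c ⊆ Ioo 0 c := Ioo_subset_Ioo_left hz0.1.le
  have hfactor : ∀ t ∈ Ioo 0 c, 0 < 1 - x * (t + z0 x) := by
    intro t ht
    obtain ⟨h₁, h₂, -⟩ := mem.1 ht
    nlinarith [z0_lt_half hx0, hz0.1]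
  have hmax : IsMaxOn (gFun d x) (Ioo 0 c) (z0 x) := by
    refine isMaxOn_Ioo_of_deriv (hderiv _ hz0).continuousAt
      (fun t ht => (hderiv t (hleft ht)).differentiableAt.differentiableWithinAt)
      (fun t ht => (hderiv t (hright ht)).differentiableAt.differentiableWithinAt) ?_ ?_
    · intro t ht
      obtain ⟨h₁, h₂, h₃⟩ := mem.1 (hleft ht)
      rw [(hderiv t (hleft ht)).deriv]
      refine mul_nonneg (by positivity) (sub_nonneg.2 (log_le_log (by positivity) ?_))
      nlinarith [mul_sub_mul_sq_eq_z0_sub_mul hx0.ne' t,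
        mul_pos (sub_pos.2 ht.2) (hfactor t (hleft ht))]
    · intro t ht
      obtain ⟨h₁, h₂, h₃⟩ := mem.1 (hright ht)
      rw [(hderiv t (hright ht)).deriv]
      refine mul_nonpos_of_nonneg_of_nonpos (by positivity)
        (sub_nonpos.2 (log_le_log (mul_pos (by linarith) (by linarith)) ?_))
      nlinarith [mul_sub_mul_sq_eq_z0_sub_mul hx0.ne' t,
        mul_pos (sub_pos.2 ht.1) (hfactor t (hright ht))]
  exact hmax (mem.2 ⟨hz, hz2, hzx⟩)

theorem fFun_le_hFun_general (d : ℕ) (x : ℝ) (hx : x ∈ Set.Ioo (0 : ℝ) 1)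
    (y z : ℝ) (hy : 0 < y) (hz : 0 < z) (hyz : y + z < 1)
    (hyx : y * x < (1 - x)/2) (hzx : z * x < (1 - x)/2) :
    fFun d x y z ≤ hFun d x ∧ hFun d x = gFun d x (z0 x) ∧
      gFun d x (z0 x) = fFun d x (z0 x) (z0 x) := by
  obtain ⟨hx0, hx1⟩ := hx
  refine ⟨?_, rfl, (fFun_self_eq_gFun d x (z0 x)).symm⟩
  calc fFun d x y z ≤ gFun d x ((y + z) / 2) :=
        fFun_le_gFun_midpoint d hx0.le hy.le hz.le hyx.le hzx.le
    _ ≤ gFun d x (z0 x) := gFun_le_gFun_z0 d hx0 hx1 (by positivity) (by linarith) (by nlinarith)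

/-- Fix an integer $d \ge 3$ and $x \in (0,1)$.  For all $y, z$ with
$y, z > 0$, $y + z < 1$, $yx < (1-x)/2$ and $zx < (1-x)/2$ one has
$f_d(x,y,z) \le h_d(x) = g_d(x,z_0(x)) = f_d(x, z_0(x), z_0(x))$. -/
theorem fFun_le_hFun (d : ℕ) (hd : 3 ≤ d) (x : ℝ) (hx : x ∈ Set.Ioo (0 : ℝ) 1)
    (y z : ℝ) (hy : 0 < y) (hz : 0 < z) (hyz : y + z < 1)
    (hyx : y * x < (1 - x)/2) (hzx : z * x < (1 - x)/2) :
    fFun d x y z ≤ hFun d x ∧ hFun d x = gFun d x (z0 x) ∧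
      gFun d x (z0 x) = fFun d x (z0 x) (z0 x) :=
  fFun_le_hFun_general d x hx y z hy hz hyz hyx hzx
end
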